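/- In the tree setting described in the context, let x ∈ 𝒞 with coding sequence ω ∈ ∏_{i≥1}{1,…,κᵢ} (i.e. {x} = ⋂_{n≥0} J_{ω|ₙ}, where ω|ₙ = ω₁⋯ωₙ), let r > 0, and let n ≥ 1 be such that J_{ω|ₙ} ⊆ B(x,r) while J_{ω|ₙ₋₁} ⊄ B(x,r). Then the ball B(x,r) is disjoint from J_θ for every word θ of length n−1 with θ ≠ ω|ₙ₋₁; in particular B(x,r) ∩ 𝒞 ⊆ J_{ω|ₙ₋₁}. -/

import Mathlib

noncomputable section

namespace CantorTree

/-- `κ n = ⌊b₁ · a n⌋`. -/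
def kappa (b₁ : ℝ) (a : ℕ → ℝ) (n : ℕ) : ℕ := ⌊b₁ * a n⌋₊

/-- A word `θ = ω₁⋯ωₙ` (represented with 0-based indices) is valid when its
`i`-th letter lies in `{1, …, κ_{i+1}}`. -/
def ValidWord (b₁ : ℝ) (a : ℕ → ℝ) (n : ℕ) (θ : Fin n → ℕ) : Prop :=
  ∀ i : Fin n, 1 ≤ θ i ∧ θ i ≤ kappa b₁ a ((i : ℕ) + 1)

/-- The tree setting: a family of nonempty compact intervals
`J_θ = [L n θ, R n θ]` of positive length indexed by valid words,
satisfying the nesting, gap and length-ratio conditions. -/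
structure TreeFamily (b₁ c₁ d₁ d₂ : ℝ) (a : ℕ → ℝ)
    (L R : ∀ n : ℕ, (Fin n → ℕ) → ℝ) : Prop where
  b₁_pos : 0 < b₁
  c₁_pos : 0 < c₁
  d₁_pos : 0 < d₁
  d₁_le_d₂ : d₁ ≤ d₂
  a_lower : ∀ n : ℕ, 1 ≤ n → 2 / b₁ ≤ a n
  a_exp : ∀ n : ℕ, 1 ≤ n → 2 * a n ≤ c₁ * Real.exp (d₁ * a n)
  len_pos : ∀ n θ, ValidWord b₁ a n θ → L n θ < R n θ
  nested : ∀ n θ, ValidWord b₁ a n θ → ∀ i : ℕ, 1 ≤ i → i ≤ kappa b₁ a (n + 1) →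
    L n θ ≤ L (n + 1) (Fin.snoc θ i) ∧ R (n + 1) (Fin.snoc θ i) ≤ R n θ
  gap : ∀ n θ, ValidWord b₁ a n θ → ∀ i : ℕ, 1 ≤ i → i + 1 ≤ kappa b₁ a (n + 1) →
    R (n + 1) (Fin.snoc θ i) < L (n + 1) (Fin.snoc θ (i + 1)) ∧
    c₁ * (R n θ - L n θ) / a (n + 1) ≤
      L (n + 1) (Fin.snoc θ (i + 1)) - R (n + 1) (Fin.snoc θ i)
  ratio : ∀ n θ, ValidWord b₁ a n θ → ∀ i : ℕ, 1 ≤ i → i ≤ kappa b₁ a (n + 1) →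
    Real.exp (-d₂ * a (n + 1)) * (R n θ - L n θ) ≤
      R (n + 1) (Fin.snoc θ i) - L (n + 1) (Fin.snoc θ i) ∧
    R (n + 1) (Fin.snoc θ i) - L (n + 1) (Fin.snoc θ i) ≤
      Real.exp (-d₁ * a (n + 1)) * (R n θ - L n θ)

/-- The Cantor set `𝒞 = ⋂ₙ ⋃_{θ of length n} J_θ`. -/
def cantorSet (b₁ : ℝ) (a : ℕ → ℝ) (L R : ∀ n : ℕ, (Fin n → ℕ) → ℝ) : Set ℝ :=
  ⋂ n : ℕ, ⋃ θ : Fin n → ℕ, ⋃ _ : ValidWord b₁ a n θ, Set.Icc (L n θ) (R n θ)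

end CantorTree

/-!
Two distinct words of length `n` first differ at some position `k`, so their bands lie in two
distinct children of the common band `J_τ` of generation `k`. The gap between these children is
at least `c₁ |J_τ| / a_{k+1}`, which by `c₁ e^{d₁ a_{k+1}} ≥ 2 a_{k+1}` is at least twice the
length of any child, hence at least twice the length of either band. Since `J_{ω|ₙ}` contains `x`
and is not contained in `B(x, r)`, its length is at least `r`, so every other band of generation
`n` stays at distance `≥ 2r` from `x`.
-/

open Set

namespace Fin

theorem exists_take_eq_and_ne_of_ne {α : Type*} {n : ℕ} {θ θ' : Fin n → α} (h : θ ≠ θ') :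
    ∃ k, ∃ hk : k < n, take k hk.le θ = take k hk.le θ' ∧ θ ⟨k, hk⟩ ≠ θ' ⟨k, hk⟩ := by
  classical
  have hex : ∃ k, ∃ hk : k < n, θ ⟨k, hk⟩ ≠ θ' ⟨k, hk⟩ := by
    by_contra! hall
    exact h (funext fun j => hall j j.isLt)
  obtain ⟨hk, hne⟩ := Nat.find_spec hex
  refine ⟨Nat.find hex, hk, funext fun j => ?_, hne⟩
  have hmin := Nat.find_min hex j.isLt
  push Not at hmin
  exact hmin _

end Fin

namespace CantorTree

variable {b₁ c₁ d₁ d₂ : ℝ} {a : ℕ → ℝ} {L R : ∀ n : ℕ, (Fin n → ℕ) → ℝ}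

theorem ValidWord.take {n : ℕ} {θ : Fin n → ℕ} (hθ : ValidWord b₁ a n θ) (m : ℕ) (h : m ≤ n) :
    ValidWord b₁ a m (Fin.take m h θ) :=
  fun j => hθ (Fin.castLE h j)

theorem ValidWord.snoc {n : ℕ} {θ : Fin n → ℕ} (hθ : ValidWord b₁ a n θ) {i : ℕ}
    (hi₁ : 1 ≤ i) (hi₂ : i ≤ kappa b₁ a (n + 1)) :
    ValidWord b₁ a (n + 1) (Fin.snoc θ i) := by
  intro j
  induction j using Fin.lastCases with
  | last => simpa using ⟨hi₁, hi₂⟩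
  | cast j => simpa using hθ j

namespace TreeFamily

variable (hT : TreeFamily b₁ c₁ d₁ d₂ a L R)
include hT

theorem a_pos {n : ℕ} (hn : 1 ≤ n) : 0 < a n :=
  (div_pos two_pos hT.b₁_pos).trans_le (hT.a_lower n hn)

theorem Icc_subset_Icc_take {n : ℕ} {θ : Fin n → ℕ} (hθ : ValidWord b₁ a n θ) {m : ℕ}
    (hmn : m ≤ n) :
    Icc (L n θ) (R n θ) ⊆ Icc (L m (Fin.take m hmn θ)) (R m (Fin.take m hmn θ)) := by
  induction hmn using Nat.decreasingInduction with
  | self => rw [Fin.take_eq_self]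
  | of_succ k hk ih =>
    refine ih.trans ?_
    rw [Fin.take_succ_eq_snoc k hk]
    have hlet := hθ ⟨k, hk⟩
    have hnest := hT.nested k _ (hθ.take k hk.le) _ hlet.1 hlet.2
    exact Icc_subset_Icc hnest.1 hnest.2

theorem length_le_length_take {n : ℕ} {θ : Fin n → ℕ} (hθ : ValidWord b₁ a n θ) {m : ℕ}
    (hmn : m ≤ n) :
    R n θ - L n θ ≤ R m (Fin.take m hmn θ) - L m (Fin.take m hmn θ) := by
  have h := (Icc_subset_Icc_iff (hT.len_pos n θ hθ).le).1 (hT.Icc_subset_Icc_take hθ hmn)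
  linarith [h.1, h.2]

theorem right_add_gap_le_left {k : ℕ} {τ : Fin k → ℕ} (hτ : ValidWord b₁ a k τ) {i j : ℕ}
    (hi : 1 ≤ i) (hij : i < j) (hj : j ≤ kappa b₁ a (k + 1)) :
    R (k + 1) (Fin.snoc τ i) + c₁ * (R k τ - L k τ) / a (k + 1) ≤
      L (k + 1) (Fin.snoc τ j) := by
  induction j, hij using Nat.le_induction with
  | base => linarith [(hT.gap k τ hτ i hi hj).2]
  | succ j hij ih =>
    have hj₁ : 1 ≤ j := hi.trans (Nat.le_of_succ_le hij)
    have hlen := hT.len_pos (k + 1) _ (hτ.snoc hj₁ (Nat.le_of_succ_le hj))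
    linarith [ih (Nat.le_of_succ_le hj), (hT.gap k τ hτ j hj₁ hj).1]

theorem gap_le_abs_sub {k : ℕ} {τ : Fin k → ℕ} (hτ : ValidWord b₁ a k τ) {i j : ℕ}
    (hi : 1 ≤ i ∧ i ≤ kappa b₁ a (k + 1)) (hj : 1 ≤ j ∧ j ≤ kappa b₁ a (k + 1)) (hij : i ≠ j)
    {x z : ℝ} (hx : x ∈ Icc (L (k + 1) (Fin.snoc τ i)) (R (k + 1) (Fin.snoc τ i)))
    (hz : z ∈ Icc (L (k + 1) (Fin.snoc τ j)) (R (k + 1) (Fin.snoc τ j))) :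
    c₁ * (R k τ - L k τ) / a (k + 1) ≤ |x - z| := by
  rcases hij.lt_or_gt with hlt | hgt
  · have := hT.right_add_gap_le_left hτ hi.1 hlt hj.2
    exact le_abs.2 (Or.inr (by linarith [hx.2, hz.1]))
  · have := hT.right_add_gap_le_left hτ hj.1 hgt hi.2
    exact le_abs.2 (Or.inl (by linarith [hx.1, hz.2]))

theorem two_mul_length_snoc_le_gap {k : ℕ} {τ : Fin k → ℕ} (hτ : ValidWord b₁ a k τ) {i : ℕ}
    (hi₁ : 1 ≤ i) (hi₂ : i ≤ kappa b₁ a (k + 1)) :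
    2 * (R (k + 1) (Fin.snoc τ i) - L (k + 1) (Fin.snoc τ i)) ≤
      c₁ * (R k τ - L k τ) / a (k + 1) := by
  set A := a (k + 1)
  have hA : 0 < A := hT.a_pos (Nat.le_add_left 1 k)
  have hJ : 0 ≤ R k τ - L k τ := (sub_pos.2 (hT.len_pos k τ hτ)).le
  have hexp : Real.exp (-d₁ * A) * (2 * A) ≤ c₁ := by
    calc Real.exp (-d₁ * A) * (2 * A)
        ≤ Real.exp (-d₁ * A) * (c₁ * Real.exp (d₁ * A)) :=
          mul_le_mul_of_nonneg_left (hT.a_exp (k + 1) (Nat.le_add_left 1 k)) (Real.exp_pos _).le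
      _ = c₁ := by rw [mul_left_comm, ← Real.exp_add, neg_mul, neg_add_cancel, Real.exp_zero,
          mul_one]
  rw [le_div_iff₀ hA]
  calc 2 * (R (k + 1) (Fin.snoc τ i) - L (k + 1) (Fin.snoc τ i)) * A
      ≤ 2 * (Real.exp (-d₁ * A) * (R k τ - L k τ)) * A := by
        gcongr; exact (hT.ratio k τ hτ i hi₁ hi₂).2
    _ = Real.exp (-d₁ * A) * (2 * A) * (R k τ - L k τ) := by ring
    _ ≤ c₁ * (R k τ - L k τ) := by gcongr

theorem two_mul_length_le_abs_sub {n : ℕ} {θ θ' : Fin n → ℕ} (hθ : ValidWord b₁ a n θ)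
    (hθ' : ValidWord b₁ a n θ') (hne : θ ≠ θ') {x z : ℝ} (hx : x ∈ Icc (L n θ) (R n θ))
    (hz : z ∈ Icc (L n θ') (R n θ')) :
    2 * (R n θ - L n θ) ≤ |x - z| := by
  obtain ⟨k, hk, htake, hne_k⟩ := Fin.exists_take_eq_and_ne_of_ne hne
  have hx' := hT.Icc_subset_Icc_take hθ hk hx
  have hz' := hT.Icc_subset_Icc_take hθ' hk hz
  have hlen := hT.length_le_length_take hθ hk
  rw [Fin.take_succ_eq_snoc] at hx' hz' hlen
  rw [← htake] at hz'
  calc 2 * (R n θ - L n θ)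
      ≤ _ := by linarith
    _ ≤ _ := hT.two_mul_length_snoc_le_gap (hθ.take k hk.le) (hθ _).1 (hθ _).2
    _ ≤ |x - z| := hT.gap_le_abs_sub (hθ.take k hk.le) (hθ _) (hθ' _) hne_k hx' hz'

end TreeFamily

end CantorTree

open CantorTree

theorem ball_meets_only_one_band_general
    (b₁ c₁ d₁ d₂ : ℝ) (a : ℕ → ℝ) (L R : ∀ n : ℕ, (Fin n → ℕ) → ℝ)
    (hT : TreeFamily b₁ c₁ d₁ d₂ a L R)
    (x : ℝ)
    (ω : ℕ → ℕ) (hω : ∀ i : ℕ, 1 ≤ ω i ∧ ω i ≤ kappa b₁ a (i + 1))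
    (hcode : {x} = ⋂ n : ℕ,
      Set.Icc (L n (fun j : Fin n => ω j)) (R n (fun j : Fin n => ω j)))
    (r : ℝ) (n : ℕ)
    (hnsub : ¬ Set.Icc (L n (fun j : Fin n => ω j))
        (R n (fun j : Fin n => ω j)) ⊆ Metric.ball x r) :
    (∀ θ : Fin n → ℕ, ValidWord b₁ a n θ → θ ≠ (fun j : Fin n => ω j) →
      Disjoint (Metric.ball x r) (Set.Icc (L n θ) (R n θ))) ∧
    Metric.ball x r ∩ cantorSet b₁ a L R ⊆
      Set.Icc (L n (fun j : Fin n => ω j)) (R n (fun j : Fin n => ω j)) := by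
  have hωn : ValidWord b₁ a n (fun j : Fin n => ω j) := fun j => hω j
  have hxn : x ∈ Icc (L n (fun j : Fin n => ω j)) (R n (fun j : Fin n => ω j)) :=
    mem_iInter.1 (hcode ▸ mem_singleton x) n
  have hr : r ≤ R n (fun j : Fin n => ω j) - L n (fun j : Fin n => ω j) := by
    obtain ⟨y, hy, hyr⟩ := not_subset.1 hnsub
    rw [Metric.mem_ball, Real.dist_eq, not_lt] at hyr
    exact hyr.trans (abs_sub_le_iff.2 ⟨by linarith [hy.2, hxn.1], by linarith [hxn.2, hy.1]⟩)
  have hdisj : ∀ θ : Fin n → ℕ, ValidWord b₁ a n θ → θ ≠ (fun j : Fin n => ω j) →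
      Disjoint (Metric.ball x r) (Icc (L n θ) (R n θ)) := by
    refine fun θ hθ hne => disjoint_left.2 fun z hzr hz => ?_
    rw [Metric.mem_ball, Real.dist_eq, abs_sub_comm] at hzr
    linarith [hT.two_mul_length_le_abs_sub hωn hθ (Ne.symm hne) hxn hz, abs_nonneg (x - z)]
  refine ⟨hdisj, fun z ⟨hzr, hzC⟩ => ?_⟩
  obtain ⟨θ, hθ, hz⟩ := mem_iUnion₂.1 (mem_iInter.1 hzC n)
  by_cases hne : θ = fun j : Fin n => ω j
  · exact hne ▸ hz
  · exact absurd hz (disjoint_left.1 (hdisj θ hθ hne) hzr)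

/-- **Claim.** Let `x ∈ 𝒞` have coding sequence `ω` (so `{x} = ⋂ₙ J_{ω|ₙ}`),
let `r > 0`, and let the level be such that `J_{ω|ₙ₊₁} ⊆ B(x,r)` while
`J_{ω|ₙ} ⊄ B(x,r)`. Then `B(x,r)` meets no band of generation `n` other than
`J_{ω|ₙ}`; in particular `B(x,r) ∩ 𝒞 ⊆ J_{ω|ₙ}`. -/
theorem ball_meets_only_one_band
    (b₁ c₁ d₁ d₂ : ℝ) (a : ℕ → ℝ) (L R : ∀ n : ℕ, (Fin n → ℕ) → ℝ)
    (hT : TreeFamily b₁ c₁ d₁ d₂ a L R)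
    (x : ℝ) (hx : x ∈ cantorSet b₁ a L R)
    (ω : ℕ → ℕ) (hω : ∀ i : ℕ, 1 ≤ ω i ∧ ω i ≤ kappa b₁ a (i + 1))
    (hcode : {x} = ⋂ n : ℕ,
      Set.Icc (L n (fun j : Fin n => ω j)) (R n (fun j : Fin n => ω j)))
    (r : ℝ) (hr : 0 < r) (n : ℕ)
    (hsub : Set.Icc (L (n + 1) (fun j : Fin (n + 1) => ω j))
        (R (n + 1) (fun j : Fin (n + 1) => ω j)) ⊆ Metric.ball x r)
    (hnsub : ¬ Set.Icc (L n (fun j : Fin n => ω j))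
        (R n (fun j : Fin n => ω j)) ⊆ Metric.ball x r) :
    (∀ θ : Fin n → ℕ, ValidWord b₁ a n θ → θ ≠ (fun j : Fin n => ω j) →
      Disjoint (Metric.ball x r) (Set.Icc (L n θ) (R n θ))) ∧
    Metric.ball x r ∩ cantorSet b₁ a L R ⊆
      Set.Icc (L n (fun j : Fin n => ω j)) (R n (fun j : Fin n => ω j)) :=
  ball_meets_only_one_band_general b₁ c₁ d₁ d₂ a L R hT x ω hω hcode r n hnsub
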